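/- Fix integers n ≥ 1 and n′ ≥ 1. Let χ, w : ℕ → ℝ satisfy χ(k) = a₀·kⁿ + a₁·kⁿ⁻¹ + O(kⁿ⁻²) and w(k) = b₀·kⁿ⁺¹ + b₁·kⁿ + O(kⁿ⁻¹) with a₀ > 0, and let χ′, w′ : ℕ → ℝ satisfy χ′(k) = a₀′·k^{n′} + a₁′·k^{n′−1} + O(k^{n′−2}) and w′(k) = b₀′·k^{n′+1} + b₁′·k^{n′} + O(k^{n′−1}) with a₀′ > 0. Define χ″(k) = χ(k)·χ′(k) and w″(k) = w(k)·χ′(k) + χ(k)·w′(k). Then χ″(k) = A₀·k^{n+n′} + A₁·k^{n+n′−1} + O(k^{n+n′−2}) and w″(k) = B₀·k^{n+n′+1} + B₁·k^{n+n′} + O(k^{n+n′−1}) with A₀ = a₀a₀′ > 0, A₁ = a₀a₁′ + a₁a₀′, B₀ = b₀a₀′ + a₀b₀′, B₁ = b₀a₁′ + b₁a₀′ + a₁b₀′ + a₀b₁′, and the Donaldson–Futaki constants add up: (A₀·B₁ − A₁·B₀)/A₀² = (a₀·b₁ − a₁·b₀)/a₀² + (a₀′·b₁′ − a₁′·b₀′)/a₀′².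 -/
import Mathlib
open Filter Asymptotics

lemma zpow_mono_O {m m' : ℤ} (h : m ≤ m') :
    (fun k : ℕ => (k : ℝ) ^ m) =O[atTop] fun k : ℕ => (k : ℝ) ^ m' := by
  apply IsBigO.of_bound 1
  filter_upwards [eventually_ge_atTop 1] with k hk
  have h1 : (1:ℝ) ≤ (k:ℝ) := by exact_mod_cast hk
  have h0 : (0:ℝ) ≤ (k:ℝ) := by linarith
  simp only [Real.norm_eq_abs, one_mul, abs_of_nonneg (zpow_nonneg h0 _)]
  exact zpow_le_zpow_right₀ h1 h

lemma mul_O {f g : ℕ → ℝ} {m m' s : ℤ}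
    (hf : f =O[atTop] fun k : ℕ => (k : ℝ) ^ m)
    (hg : g =O[atTop] fun k : ℕ => (k : ℝ) ^ m')
    (hs : m + m' ≤ s) :
    (fun k => f k * g k) =O[atTop] fun k : ℕ => (k : ℝ) ^ s := by
  refine ((hf.mul hg).trans ?_)
  refine IsBigO.trans ?_ (zpow_mono_O hs)
  apply IsBigO.of_bound 1
  filter_upwards [eventually_ge_atTop 1] with k hk
  have h0 : (k:ℝ) ≠ 0 := by positivity
  rw [← zpow_add₀ h0, one_mul]

lemma natpow_O {m : ℕ} {s : ℤ} (h : (m:ℤ) ≤ s) :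
    (fun k : ℕ => (k:ℝ)^m) =O[atTop] fun k : ℕ => (k:ℝ)^s := by
  have : (fun k : ℕ => (k:ℝ)^m) = fun k : ℕ => (k:ℝ)^(m:ℤ) :=
    funext fun k => (zpow_natCast _ m).symm
  rw [this]; exact zpow_mono_O h

/-- Numeric content of Proposition 2.6(3): for the "fiber product" data
`χ'' = χ·χ'` and `w'' = w·χ' + χ·w'`, the expansions multiply/add as stated and
the Donaldson–Futaki constants add up. -/
theorem statement3 (n n' : ℕ) (hn : 1 ≤ n) (hn' : 1 ≤ n')
    (χ w χ' w' : ℕ → ℝ) (a₀ a₁ b₀ b₁ a₀' a₁' b₀' b₁' : ℝ)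
    (ha₀ : 0 < a₀) (ha₀' : 0 < a₀')
    (hχ : (fun k : ℕ => χ k - (a₀ * (k : ℝ) ^ n + a₁ * (k : ℝ) ^ ((n : ℤ) - 1)))
      =O[atTop] fun k : ℕ => (k : ℝ) ^ ((n : ℤ) - 2))
    (hw : (fun k : ℕ => w k - (b₀ * (k : ℝ) ^ (n + 1) + b₁ * (k : ℝ) ^ n))
      =O[atTop] fun k : ℕ => (k : ℝ) ^ ((n : ℤ) - 1))
    (hχ' : (fun k : ℕ => χ' k - (a₀' * (k : ℝ) ^ n' + a₁' * (k : ℝ) ^ ((n' : ℤ) - 1)))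
      =O[atTop] fun k : ℕ => (k : ℝ) ^ ((n' : ℤ) - 2))
    (hw' : (fun k : ℕ => w' k - (b₀' * (k : ℝ) ^ (n' + 1) + b₁' * (k : ℝ) ^ n'))
      =O[atTop] fun k : ℕ => (k : ℝ) ^ ((n' : ℤ) - 1)) :
    ((fun k : ℕ => χ k * χ' k -
        ((a₀ * a₀') * (k : ℝ) ^ (n + n') +
          (a₀ * a₁' + a₁ * a₀') * (k : ℝ) ^ ((n : ℤ) + (n' : ℤ) - 1)))
      =O[atTop] fun k : ℕ => (k : ℝ) ^ ((n : ℤ) + (n' : ℤ) - 2)) ∧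
    0 < a₀ * a₀' ∧
    ((fun k : ℕ => w k * χ' k + χ k * w' k -
        ((b₀ * a₀' + a₀ * b₀') * (k : ℝ) ^ (n + n' + 1) +
          (b₀ * a₁' + b₁ * a₀' + a₁ * b₀' + a₀ * b₁') * (k : ℝ) ^ (n + n')))
      =O[atTop] fun k : ℕ => (k : ℝ) ^ ((n : ℤ) + (n' : ℤ) - 1)) ∧
    ((a₀ * a₀') * (b₀ * a₁' + b₁ * a₀' + a₁ * b₀' + a₀ * b₁') -
        (a₀ * a₁' + a₁ * a₀') * (b₀ * a₀' + a₀ * b₀')) / (a₀ * a₀') ^ 2 =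
      (a₀ * b₁ - a₁ * b₀) / a₀ ^ 2 + (a₀' * b₁' - a₁' * b₀') / a₀' ^ 2 := by
  -- main terms
  set mχ : ℕ → ℝ := fun k => a₀ * (k : ℝ) ^ n + a₁ * (k : ℝ) ^ ((n : ℤ) - 1) with hmχdef
  set mw : ℕ → ℝ := fun k => b₀ * (k : ℝ) ^ (n + 1) + b₁ * (k : ℝ) ^ n with hmwdef
  set mχ' : ℕ → ℝ := fun k => a₀' * (k : ℝ) ^ n' + a₁' * (k : ℝ) ^ ((n' : ℤ) - 1) with hmχ'def
  set mw' : ℕ → ℝ := fun k => b₀' * (k : ℝ) ^ (n' + 1) + b₁' * (k : ℝ) ^ n' with hmw'def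
  have hmχ : mχ =O[atTop] fun k : ℕ => (k : ℝ) ^ (n : ℤ) :=
    ((natpow_O le_rfl).const_mul_left a₀).add ((zpow_mono_O (by omega)).const_mul_left a₁)
  have hmχ' : mχ' =O[atTop] fun k : ℕ => (k : ℝ) ^ (n' : ℤ) :=
    ((natpow_O le_rfl).const_mul_left a₀').add ((zpow_mono_O (by omega)).const_mul_left a₁')
  have hmw : mw =O[atTop] fun k : ℕ => (k : ℝ) ^ ((n : ℤ) + 1) :=
    ((natpow_O (by push_cast; omega)).const_mul_left b₀).add
      ((natpow_O (by omega)).const_mul_left b₁)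
  have hmw' : mw' =O[atTop] fun k : ℕ => (k : ℝ) ^ ((n' : ℤ) + 1) :=
    ((natpow_O (by push_cast; omega)).const_mul_left b₀').add
      ((natpow_O (by omega)).const_mul_left b₁')
  refine ⟨?_, mul_pos ha₀ ha₀', ?_, by field_simp; ring⟩
  · -- χ'' expansion
    have hO : (fun k : ℕ =>
        (χ k - mχ k) * (χ' k - mχ' k) + mχ k * (χ' k - mχ' k) + mχ' k * (χ k - mχ k)
          + (a₁ * a₁') * (k : ℝ) ^ ((n : ℤ) - 1 + ((n' : ℤ) - 1)))
        =O[atTop] fun k : ℕ => (k : ℝ) ^ ((n : ℤ) + (n' : ℤ) - 2) := by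
      exact ((((mul_O hχ hχ' (by omega)).add (mul_O hmχ hχ' (by omega))).add
        (mul_O hmχ' hχ (by omega))).add ((zpow_mono_O (by omega)).const_mul_left _))
    refine hO.congr' ?_ EventuallyEq.rfl
    filter_upwards [eventually_ge_atTop 1] with k hk
    have h0 : (k:ℝ) ≠ 0 := by positivity
    simp only [hmχdef, hmχ'def, zpow_sub₀ h0, zpow_add₀ h0, zpow_one, zpow_natCast, pow_add]
    field_simp
    ring
  · -- w'' expansion
    have hO : (fun k : ℕ =>
        (w k - mw k) * (χ' k - mχ' k) + (w k - mw k) * mχ' k + mw k * (χ' k - mχ' k)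
          + (χ k - mχ k) * (w' k - mw' k) + (χ k - mχ k) * mw' k + mχ k * (w' k - mw' k)
          + (b₁ * a₁' + a₁ * b₁') * (k : ℝ) ^ ((n : ℤ) + (n' : ℤ) - 1))
        =O[atTop] fun k : ℕ => (k : ℝ) ^ ((n : ℤ) + (n' : ℤ) - 1) := by
      exact (((((((mul_O hw hχ' (by omega)).add (mul_O hw hmχ' (by omega))).add
        (mul_O hmw hχ' (by omega))).add (mul_O hχ hw' (by omega))).add
        (mul_O hχ hmw' (by omega))).add (mul_O hmχ hw' (by omega))).add
        ((zpow_mono_O le_rfl).const_mul_left _))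
    refine hO.congr' ?_ EventuallyEq.rfl
    filter_upwards [eventually_ge_atTop 1] with k hk
    have h0 : (k:ℝ) ≠ 0 := by positivity
    simp only [hmχdef, hmχ'def, hmwdef, hmw'def, zpow_sub₀ h0, zpow_add₀ h0, zpow_one,
      zpow_natCast, pow_add, pow_one]
    field_simp
    ring
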